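/- Let q ∈ (0,1) and for each q let a₀, (a⁺(i))_{i≥1} be i.i.d. G_q on [0,1] with mean q, independent of i.i.d. standard normals (Z⁺(u)) and Δ ≠ 0 fixed. Define B⁺ = { a₀ ≤ 2 a⁺(i) exp(Δ S⁺(i) − iΔ²/2) for some i ≥ 1 } where S⁺(i) = ∑_{u=1}^i Z⁺(u). If q^{−1} ∫_0^1 [1 − G_q(x)]² dx → 0 as q → 0, then q^{−1} E[a₀ · 1_{B⁺}] → 0 as q → 0. -/

import Mathlib

/-!
On `B⁺(i) = {a₀ ≤ 2 a⁺(i) Lᵢ}`, where `Lᵢ = exp (Δ S⁺(i) − iΔ²/2)` is the Gaussian likelihood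
ratio (a mean-one variable independent of `(a₀, a⁺(i))`), two pointwise bounds hold:
`a₀ ≤ min a₀ a⁺(i) · (1 + 2Lᵢ)` and `a₀ ≤ √(2 a₀ a⁺(i) Lᵢ) ≤ (a₀ + a⁺(i)) √Lᵢ / √2`.
Taking expectations, the first gives `3 E[min a₀ a⁺(i)] = 3 ∫₀¹ (1 − G_q)²`, and the second gives
`√2 q e^{−iΔ²/8}` because `E √Lᵢ = e^{−iΔ²/8}`. A union bound, using the first estimate for the
first `n` indices and the second for the others, yields
`q⁻¹ E[a₀ 1_{B⁺}] ≤ 3n q⁻¹ ∫₀¹ (1 − G_q)² + O(e^{−nΔ²/8})`: let `q → 0`, then `n → ∞`.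
-/

open MeasureTheory ProbabilityTheory Real Finset Filter Topology

lemma le_min_mul_one_add_two_mul {a b w : ℝ} (ha : 0 ≤ a) (hb : 0 ≤ b) (hw : 0 ≤ w)
    (h : a ≤ 2 * b * w) : a ≤ min a b * (1 + 2 * w) := by
  rcases le_total a b with hab | hba
  · rw [min_eq_left hab]
    nlinarith
  · rw [min_eq_right hba]
    nlinarith

lemma le_add_mul_sqrt_div_sqrt_two {a b w : ℝ} (ha : 0 ≤ a) (hb : 0 ≤ b) (hw : 0 ≤ w)
    (h : a ≤ 2 * b * w) : a ≤ (a + b) * √w / √2 := by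
  rw [le_div_iff₀ (by positivity), ← pow_le_pow_iff_left₀ (by positivity) (by positivity)
    two_ne_zero, mul_pow, mul_pow, sq_sqrt hw, sq_sqrt zero_le_two]
  nlinarith [sq_nonneg (a - b), mul_le_mul_of_nonneg_left h ha]

lemma exp_neg_sq_div_eight_lt_one {Δ : ℝ} (hΔ : Δ ≠ 0) : exp (-(Δ ^ 2) / 8) < 1 :=
  exp_lt_one_iff.2 (by nlinarith [pow_pos (abs_pos.2 hΔ) 2, sq_abs Δ])

lemma tsum_le_mul_add_geometric {c : ℕ → ℝ} {A C r : ℝ} (hc0 : ∀ j, 0 ≤ c j)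
    (hA : ∀ j, c j ≤ A) (hC : ∀ j, c j ≤ C * r ^ j) (hr0 : 0 ≤ r) (hr1 : r < 1) (n : ℕ) :
    ∑' j, c j ≤ n * A + C * r ^ n / (1 - r) := by
  have hc : Summable c :=
    .of_nonneg_of_le hc0 hC ((summable_geometric_of_lt_one hr0 hr1).mul_left C)
  rw [← hc.sum_add_tsum_nat_add n]
  gcongr
  · simpa using Finset.sum_le_card_nsmul (range n) c A fun j _ => hA j
  · calc ∑' j, c (j + n) ≤ ∑' j, C * r ^ n * r ^ j :=
          Summable.tsum_le_tsum (fun j => by rw [mul_assoc, ← pow_add, add_comm n]; exact hC _)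
            ((summable_nat_add_iff n).2 hc) ((summable_geometric_of_lt_one hr0 hr1).mul_left _)
      _ = C * r ^ n / (1 - r) := by rw [tsum_mul_left, tsum_geometric_of_lt_one hr0 hr1]; ring

lemma tendsto_zero_of_le_mul_add {α : Type*} {l : Filter α} {F g : α → ℝ} {t : ℕ → ℝ}
    (hg : Tendsto g l (𝓝 0)) (ht : Tendsto t atTop (𝓝 0)) (hF0 : ∀ᶠ x in l, 0 ≤ F x)
    (hF : ∀ n : ℕ, ∀ᶠ x in l, F x ≤ n * g x + t n) : Tendsto F l (𝓝 0) := by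
  refine tendsto_order.2 ⟨fun c hc => hF0.mono fun x hx => hc.trans_le hx, fun ε hε => ?_⟩
  obtain ⟨n, hn⟩ := (ht.eventually (eventually_lt_nhds (half_pos hε))).exists
  have hng : Tendsto (fun x => n * g x) l (𝓝 0) := by simpa using hg.const_mul (n : ℝ)
  filter_upwards [hF n, hng.eventually (eventually_lt_nhds (half_pos hε))] with x hx hgx
  linarith

section Probability

variable {Ω : Type*} [MeasurableSpace Ω] {μ : Measure Ω} {a b W : Ω → ℝ}

lemma setIntegral_iUnion_le_tsum {ι : Type*} [Countable ι] {s : ι → Set Ω} {f : Ω → ℝ}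
    (hf0 : ∀ ω, 0 ≤ f ω) (hf : Integrable f μ) (hsum : Summable fun i => ∫ ω in s i, f ω ∂μ) :
    ∫ ω in ⋃ i, s i, f ω ∂μ ≤ ∑' i, ∫ ω in s i, f ω ∂μ := by
  have hnonneg : ∀ t : Set Ω, 0 ≤ ∫ ω in t, f ω ∂μ := fun t =>
    setIntegral_nonneg_of_ae (.of_forall hf0)
  have hofReal : ∀ t : Set Ω, ENNReal.ofReal (∫ ω in t, f ω ∂μ) = ∫⁻ ω in t, .ofReal (f ω) ∂μ :=
    fun t => ofReal_integral_eq_lintegral_ofReal hf.integrableOn (.of_forall hf0)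
  rw [← ENNReal.ofReal_le_ofReal_iff (tsum_nonneg fun i => hnonneg _),
    ENNReal.ofReal_tsum_of_nonneg (fun i => hnonneg _) hsum, hofReal]
  simp_rw [hofReal]
  exact lintegral_iUnion_le s _

lemma ProbabilityTheory.iIndepFun.indepFun_prodMk_sum {ι : Type*} {f : ι → Ω → ℝ}
    (h : iIndepFun f μ) (hf : ∀ i, Measurable (f i)) {i j : ι} {s : Finset ι} (hi : i ∉ s)
    (hj : j ∉ s) : IndepFun (fun ω => (f i ω, f j ω)) (fun ω => ∑ k ∈ s, f k ω) μ := by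
  classical
  have hdisj : Disjoint ({i, j} : Finset ι) s := by simp [hi, hj]
  have := (h.indepFun_finset _ _ hdisj hf).comp
    (φ := fun v : ({i, j} : Finset ι) → ℝ => (v ⟨i, by simp⟩, v ⟨j, by simp⟩))
    (ψ := fun v : s → ℝ => ∑ k, v k) (by fun_prop) (by fun_prop)
  convert this using 1
  · rfl
  · funext ω
    exact (Finset.sum_coe_sort s (f · ω)).symm

lemma measureReal_lt_min_eq [IsProbabilityMeasure μ] (ha : Measurable a) (hind : IndepFun a b μ)
    (hident : IdentDistrib b a μ μ) (t : ℝ) :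
    μ.real {ω | t < min (a ω) (b ω)} = (1 - μ.real {ω | a ω ≤ t}) ^ 2 := by
  have hcompl : a ⁻¹' Set.Ioi t = {ω | a ω ≤ t}ᶜ := by ext; simp
  have hinter : {ω | t < min (a ω) (b ω)} = a ⁻¹' Set.Ioi t ∩ b ⁻¹' Set.Ioi t := by ext; simp
  rw [hinter, measureReal_def, hind.measure_inter_preimage_eq_mul _ _ measurableSet_Ioi
    measurableSet_Ioi, hident.measure_mem_eq measurableSet_Ioi, ENNReal.toReal_mul,
    ← measureReal_def, hcompl, probReal_compl_eq_one_sub (measurableSet_le ha measurable_const),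
    sq]

lemma integral_min_eq_intervalIntegral_one_sub_sq [IsProbabilityMeasure μ] (ha : Measurable a)
    (hb : Measurable b) (ha01 : ∀ ω, a ω ∈ Set.Icc (0 : ℝ) 1) (hb0 : ∀ ω, 0 ≤ b ω)
    (hind : IndepFun a b μ) (hident : IdentDistrib b a μ μ) :
    ∫ ω, min (a ω) (b ω) ∂μ = ∫ x in (0 : ℝ)..1, (1 - μ.real {ω | a ω ≤ x}) ^ 2 := by
  have hmin01 : ∀ ω, min (a ω) (b ω) ∈ Set.Icc (0 : ℝ) 1 := fun ω =>
    ⟨le_min (ha01 ω).1 (hb0 ω), (min_le_left _ _).trans (ha01 ω).2⟩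
  have hlayer : Set.EqOn (fun t => μ.real {ω | t < min (a ω) (b ω)})
      ((Set.Ioc 0 1).indicator fun x => (1 - μ.real {ω | a ω ≤ x}) ^ 2) (Set.Ioi 0) := by
    intro t ht
    by_cases ht1 : t ≤ 1
    · rw [Set.indicator_of_mem (show t ∈ Set.Ioc 0 1 from ⟨ht, ht1⟩)]
      exact measureReal_lt_min_eq ha hind hident t
    · have hempty : {ω | t < min (a ω) (b ω)} = ∅ :=
        Set.eq_empty_of_forall_notMem fun ω hω => ht1 (hω.le.trans (hmin01 ω).2)
      rw [Set.indicator_of_notMem fun h => ht1 h.2]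
      simp only [hempty, measureReal_empty]
  have hint : Integrable (fun ω => min (a ω) (b ω)) μ :=
    .of_mem_Icc 0 1 (ha.min hb).aemeasurable (.of_forall hmin01)
  rw [hint.integral_eq_integral_meas_lt (.of_forall fun ω => (hmin01 ω).1),
    setIntegral_congr_fun measurableSet_Ioi hlayer, setIntegral_indicator measurableSet_Ioc,
    Set.inter_eq_right.mpr Set.Ioc_subset_Ioi_self, intervalIntegral.integral_of_le zero_le_one]

lemma setIntegral_le_integral_min_mul [IsFiniteMeasure μ] (ha : Measurable a)
    (hb : Measurable b) (hW : Measurable W) (ha0 : ∀ ω, 0 ≤ a ω) (hb0 : ∀ ω, 0 ≤ b ω)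
    (hW0 : ∀ ω, 0 ≤ W ω) (haint : Integrable a μ) (hWint : Integrable W μ)
    (hind : IndepFun (fun ω => (a ω, b ω)) W μ) :
    ∫ ω in {ω | a ω ≤ 2 * b ω * W ω}, a ω ∂μ
      ≤ (∫ ω, min (a ω) (b ω) ∂μ) * ∫ ω, 1 + 2 * W ω ∂μ := by
  have hminW : IndepFun (fun ω => min (a ω) (b ω)) (fun ω => 1 + 2 * W ω) μ :=
    hind.comp (φ := fun p : ℝ × ℝ => min p.1 p.2) (ψ := fun w => 1 + 2 * w)
      (by fun_prop) (by fun_prop)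
  have hmin : Integrable (fun ω => min (a ω) (b ω)) μ :=
    haint.mono' (ha.min hb).aestronglyMeasurable (.of_forall fun ω => by
      rw [Real.norm_eq_abs, abs_of_nonneg (le_min (ha0 ω) (hb0 ω))]
      exact min_le_left _ _)
  have hprod := hminW.integrable_mul hmin ((integrable_const 1).add (hWint.const_mul 2))
  calc ∫ ω in {ω | a ω ≤ 2 * b ω * W ω}, a ω ∂μ
      ≤ ∫ ω in {ω | a ω ≤ 2 * b ω * W ω}, min (a ω) (b ω) * (1 + 2 * W ω) ∂μ :=
        setIntegral_mono_on haint.integrableOn hprod.integrableOn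
          (measurableSet_le ha (by fun_prop)) fun ω hω =>
            le_min_mul_one_add_two_mul (ha0 ω) (hb0 ω) (hW0 ω) hω
    _ ≤ ∫ ω, min (a ω) (b ω) * (1 + 2 * W ω) ∂μ :=
        setIntegral_le_integral hprod (.of_forall fun ω =>
          mul_nonneg (le_min (ha0 ω) (hb0 ω)) (by linarith [hW0 ω]))
    _ = _ := hminW.integral_fun_mul_eq_mul_integral hmin.1 (by fun_prop)

lemma setIntegral_le_three_mul_intervalIntegral [IsProbabilityMeasure μ] (ha : Measurable a)
    (hb : Measurable b) (hW : Measurable W) (ha01 : ∀ ω, a ω ∈ Set.Icc (0 : ℝ) 1)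
    (hb0 : ∀ ω, 0 ≤ b ω) (hW0 : ∀ ω, 0 ≤ W ω) (hWint : Integrable W μ) (hW1 : ∫ ω, W ω ∂μ = 1)
    (hab : IndepFun a b μ) (hident : IdentDistrib b a μ μ)
    (hind : IndepFun (fun ω => (a ω, b ω)) W μ) :
    ∫ ω in {ω | a ω ≤ 2 * b ω * W ω}, a ω ∂μ
      ≤ 3 * ∫ x in (0 : ℝ)..1, (1 - μ.real {ω | a ω ≤ x}) ^ 2 := by
  have h := setIntegral_le_integral_min_mul ha hb hW (fun ω => (ha01 ω).1) hb0 hW0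
    (.of_mem_Icc 0 1 ha.aemeasurable (.of_forall ha01)) hWint hind
  rwa [integral_min_eq_intervalIntegral_one_sub_sq ha hb ha01 hb0 hab hident,
    integral_add (integrable_const _) (hWint.const_mul 2), integral_const_mul, hW1,
    integral_const, probReal_univ, one_smul, mul_comm, show (1 : ℝ) + 2 * 1 = 3 by norm_num] at h

lemma setIntegral_le_integral_add_mul_integral_sqrt (ha : Measurable a) (hb : Measurable b)
    (hW : Measurable W) (ha0 : ∀ ω, 0 ≤ a ω) (hb0 : ∀ ω, 0 ≤ b ω) (hW0 : ∀ ω, 0 ≤ W ω)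
    (haint : Integrable a μ) (hbint : Integrable b μ) (hWint : Integrable (fun ω => √(W ω)) μ)
    (hind : IndepFun (fun ω => (a ω, b ω)) W μ) :
    ∫ ω in {ω | a ω ≤ 2 * b ω * W ω}, a ω ∂μ
      ≤ (∫ ω, a ω ∂μ + ∫ ω, b ω ∂μ) * (∫ ω, √(W ω) ∂μ) / √2 := by
  have hsumW : IndepFun (fun ω => a ω + b ω) (fun ω => √(W ω)) μ :=
    hind.comp (φ := fun p : ℝ × ℝ => p.1 + p.2) (ψ := fun w => √w) (by fun_prop) (by fun_prop)
  have hprod := (hsumW.integrable_mul (haint.add hbint) hWint).div_const √2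
  calc ∫ ω in {ω | a ω ≤ 2 * b ω * W ω}, a ω ∂μ
      ≤ ∫ ω in {ω | a ω ≤ 2 * b ω * W ω}, (a ω + b ω) * √(W ω) / √2 ∂μ :=
        setIntegral_mono_on haint.integrableOn hprod.integrableOn
          (measurableSet_le ha (by fun_prop)) fun ω hω =>
            le_add_mul_sqrt_div_sqrt_two (ha0 ω) (hb0 ω) (hW0 ω) hω
    _ ≤ ∫ ω, (a ω + b ω) * √(W ω) / √2 ∂μ :=
        setIntegral_le_integral hprod (.of_forall fun ω => by
          have := ha0 ω; have := hb0 ω; positivity)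
    _ = _ := by
      rw [integral_div, hsumW.integral_fun_mul_eq_mul_integral (by fun_prop) (by fun_prop),
        integral_add haint hbint]

end Probability

noncomputable def likelihoodRatio {Ω : Type*} (Δ : ℝ) (Z : ℕ → Ω → ℝ) (i : ℕ) (ω : Ω) : ℝ :=
  exp (Δ * ∑ u ∈ range i, Z u ω - i * Δ ^ 2 / 2)

section LikelihoodRatio

variable {Ω : Type*} {Z : ℕ → Ω → ℝ}

lemma likelihoodRatio_nonneg (Δ : ℝ) (Z : ℕ → Ω → ℝ) (i : ℕ) (ω : Ω) :
    0 ≤ likelihoodRatio Δ Z i ω :=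
  (exp_pos _).le

lemma sqrt_likelihoodRatio (Δ : ℝ) (Z : ℕ → Ω → ℝ) (i : ℕ) (ω : Ω) :
    √(likelihoodRatio Δ Z i ω) = exp (Δ / 2 * ∑ u ∈ range i, Z u ω - i * Δ ^ 2 / 4) := by
  rw [likelihoodRatio, ← exp_half]
  ring_nf

variable [MeasurableSpace Ω] {μ : Measure Ω}

@[fun_prop]
lemma measurable_likelihoodRatio (hmeas : ∀ u, Measurable (Z u)) (Δ : ℝ) (i : ℕ) :
    Measurable (likelihoodRatio Δ Z i) := by
  unfold likelihoodRatio
  fun_prop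

lemma mgf_sum_range_of_gaussian (hZ : iIndepFun Z μ) (hmeas : ∀ u, Measurable (Z u))
    (hdist : ∀ u, μ.map (Z u) = gaussianReal 0 1) (i : ℕ) (t : ℝ) :
    mgf (fun ω => ∑ u ∈ range i, Z u ω) μ t = exp (i * t ^ 2 / 2) := by
  rw [← Finset.sum_fn, hZ.mgf_sum hmeas, Finset.prod_congr rfl fun u _ =>
    mgf_gaussianReal (hdist u) t, prod_const, card_range, ← exp_nat_mul]
  congr 1
  push_cast
  ring

lemma integrable_exp_mul_sum_range_sub (hZ : iIndepFun Z μ) (hmeas : ∀ u, Measurable (Z u))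
    (hdist : ∀ u, μ.map (Z u) = gaussianReal 0 1) (i : ℕ) (t c : ℝ) :
    Integrable (fun ω => exp (t * ∑ u ∈ range i, Z u ω - c)) μ := by
  have := hZ.isProbabilityMeasure
  have hint : Integrable (fun ω => exp (t * ∑ u ∈ range i, Z u ω)) μ := by
    rw [← mgf_pos_iff, mgf_sum_range_of_gaussian hZ hmeas hdist]
    exact exp_pos _
  simpa [sub_eq_add_neg, exp_add, mul_comm] using hint.const_mul (exp (-c))

lemma integral_exp_mul_sum_range_sub (hZ : iIndepFun Z μ) (hmeas : ∀ u, Measurable (Z u))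
    (hdist : ∀ u, μ.map (Z u) = gaussianReal 0 1) (i : ℕ) (t c : ℝ) :
    ∫ ω, exp (t * ∑ u ∈ range i, Z u ω - c) ∂μ = exp (i * t ^ 2 / 2 - c) := by
  simp_rw [sub_eq_add_neg, exp_add, integral_mul_const]
  rw [← mgf, mgf_sum_range_of_gaussian hZ hmeas hdist]

lemma integrable_likelihoodRatio (hZ : iIndepFun Z μ) (hmeas : ∀ u, Measurable (Z u))
    (hdist : ∀ u, μ.map (Z u) = gaussianReal 0 1) (Δ : ℝ) (i : ℕ) :
    Integrable (likelihoodRatio Δ Z i) μ :=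
  integrable_exp_mul_sum_range_sub hZ hmeas hdist i Δ _

lemma integral_likelihoodRatio (hZ : iIndepFun Z μ) (hmeas : ∀ u, Measurable (Z u))
    (hdist : ∀ u, μ.map (Z u) = gaussianReal 0 1) (Δ : ℝ) (i : ℕ) :
    ∫ ω, likelihoodRatio Δ Z i ω ∂μ = 1 := by
  simp only [likelihoodRatio, integral_exp_mul_sum_range_sub hZ hmeas hdist, sub_self, exp_zero]

lemma integrable_sqrt_likelihoodRatio (hZ : iIndepFun Z μ) (hmeas : ∀ u, Measurable (Z u))
    (hdist : ∀ u, μ.map (Z u) = gaussianReal 0 1) (Δ : ℝ) (i : ℕ) :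
    Integrable (fun ω => √(likelihoodRatio Δ Z i ω)) μ := by
  simp_rw [sqrt_likelihoodRatio]
  exact integrable_exp_mul_sum_range_sub hZ hmeas hdist i _ _

lemma integral_sqrt_likelihoodRatio (hZ : iIndepFun Z μ) (hmeas : ∀ u, Measurable (Z u))
    (hdist : ∀ u, μ.map (Z u) = gaussianReal 0 1) (Δ : ℝ) (i : ℕ) :
    ∫ ω, √(likelihoodRatio Δ Z i ω) ∂μ = exp (-(Δ ^ 2) / 8) ^ i := by
  simp_rw [sqrt_likelihoodRatio, integral_exp_mul_sum_range_sub hZ hmeas hdist, ← exp_nat_mul]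
  ring_nf

lemma indepFun_prodMk_likelihoodRatio {a : Ω → ℝ} {b : ℕ → Ω → ℝ} (ha : Measurable a)
    (hb : ∀ i, Measurable (b i)) (hZ : ∀ u, Measurable (Z u))
    (hindep : iIndepFun (Sum.elim (fun _ : Unit => a) (Sum.elim b Z)) μ) (Δ : ℝ) (i : ℕ) :
    IndepFun (fun ω => (a ω, b i ω)) (likelihoodRatio Δ Z i) μ := by
  have hf : ∀ k, Measurable (Sum.elim (fun _ : Unit => a) (Sum.elim b Z) k) := by
    rintro (_ | i | u) <;> simp [ha, hb, hZ]
  have := hindep.indepFun_prodMk_sum hf (i := .inl ()) (j := .inr (.inl i))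
    (s := (range i).map ⟨_, Sum.inr_injective.comp Sum.inr_injective⟩) (by simp) (by simp)
  simp only [Finset.sum_map] at this
  exact this.comp (φ := id) (ψ := fun s => exp (Δ * s - i * Δ ^ 2 / 2)) measurable_id
    (by fun_prop)

end LikelihoodRatio

theorem setIntegral_scan_le {Ω : Type*} [MeasurableSpace Ω] {μ : Measure Ω}
    [IsProbabilityMeasure μ] {Δ : ℝ} {a : Ω → ℝ} {b Z : ℕ → Ω → ℝ} (hΔ : Δ ≠ 0)
    (ha : Measurable a) (hb : ∀ i, Measurable (b i)) (hZ : ∀ u, Measurable (Z u))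
    (hindep : iIndepFun (Sum.elim (fun _ : Unit => a) (Sum.elim b Z)) μ)
    (ha01 : ∀ ω, a ω ∈ Set.Icc (0 : ℝ) 1) (hb0 : ∀ i ω, 0 ≤ b i ω)
    (hident : ∀ i, μ.map (b i) = μ.map a) (hdist : ∀ u, μ.map (Z u) = gaussianReal 0 1)
    (n : ℕ) :
    ∫ ω in {ω | ∃ i : ℕ, 1 ≤ i ∧ a ω ≤ 2 * b i ω * likelihoodRatio Δ Z i ω}, a ω ∂μ
      ≤ n * (3 * ∫ x in (0 : ℝ)..1, (1 - μ.real {ω | a ω ≤ x}) ^ 2)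
        + √2 * (∫ ω, a ω ∂μ) * exp (-(Δ ^ 2) / 8) ^ n / (1 - exp (-(Δ ^ 2) / 8)) := by
  have hZindep : iIndepFun Z μ :=
    hindep.precomp (g := Sum.inr ∘ Sum.inr) (Sum.inr_injective.comp Sum.inr_injective)
  have haint : Integrable a μ := .of_mem_Icc 0 1 ha.aemeasurable (.of_forall ha01)
  have hbident : ∀ i, IdentDistrib (b i) a μ μ := fun i =>
    ⟨(hb i).aemeasurable, ha.aemeasurable, hident i⟩
  have hind := indepFun_prodMk_likelihoodRatio ha hb hZ hindep Δ
  set B : ℕ → Set Ω := fun i => {ω | a ω ≤ 2 * b i ω * likelihoodRatio Δ Z i ω}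
  have hnonneg : ∀ i, 0 ≤ ∫ ω in B i, a ω ∂μ := fun i =>
    setIntegral_nonneg_of_ae (.of_forall fun ω => (ha01 ω).1)
  have hsmall : ∀ i, ∫ ω in B i, a ω ∂μ
      ≤ 3 * ∫ x in (0 : ℝ)..1, (1 - μ.real {ω | a ω ≤ x}) ^ 2 := fun i =>
    setIntegral_le_three_mul_intervalIntegral ha (hb i) (measurable_likelihoodRatio hZ Δ i) ha01
      (hb0 i) (likelihoodRatio_nonneg Δ Z i) (integrable_likelihoodRatio hZindep hZ hdist Δ i)
      (integral_likelihoodRatio hZindep hZ hdist Δ i)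
      (hindep.indepFun (by simp : Sum.inl () ≠ Sum.inr (Sum.inl i))) (hbident i) (hind i)
  have hlarge : ∀ i, ∫ ω in B i, a ω ∂μ ≤ √2 * (∫ ω, a ω ∂μ) * exp (-(Δ ^ 2) / 8) ^ i := by
    intro i
    have h := setIntegral_le_integral_add_mul_integral_sqrt ha (hb i)
      (measurable_likelihoodRatio hZ Δ i) (fun ω => (ha01 ω).1) (hb0 i)
      (likelihoodRatio_nonneg Δ Z i) haint ((hbident i).integrable_iff.2 haint)
      (integrable_sqrt_likelihoodRatio hZindep hZ hdist Δ i) (hind i)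
    rw [(hbident i).integral_eq, integral_sqrt_likelihoodRatio hZindep hZ hdist] at h
    calc _ ≤ _ := h
      _ = _ := by field_simp; rw [sq_sqrt zero_le_two]; ring
  have hr1 := exp_neg_sq_div_eight_lt_one hΔ
  calc _ ≤ ∫ ω in ⋃ i, B i, a ω ∂μ :=
        setIntegral_mono_set haint.integrableOn (.of_forall fun ω => (ha01 ω).1)
          (LE.le.eventuallyLE fun ω (⟨i, _, hi⟩ : ∃ i, 1 ≤ i ∧ ω ∈ B i) =>
            Set.mem_iUnion.2 ⟨i, hi⟩)
    _ ≤ ∑' i, ∫ ω in B i, a ω ∂μ :=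
        setIntegral_iUnion_le_tsum (fun ω => (ha01 ω).1) haint (.of_nonneg_of_le hnonneg hlarge
          ((summable_geometric_of_lt_one (exp_pos _).le hr1).mul_left _))
    _ ≤ _ := tsum_le_mul_add_geometric hnonneg hsmall hlarge (exp_pos _).le hr1 n

/-- For each `q ∈ (0,1)`, let `a₀, (a⁺(i))` be i.i.d. `G_q` on `[0,1]` with
mean `q`, independent of i.i.d. standard normals `(Z⁺(u))`, `Δ ≠ 0` fixed, and
`B⁺ = {a₀ ≤ 2 a⁺(i) exp(Δ S⁺(i) − iΔ²/2) for some i ≥ 1}`. If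
`q⁻¹ ∫_0^1 (1 − G_q(x))² dx → 0` as `q → 0⁺`, then `q⁻¹ E[a₀ 1_{B⁺}] → 0` as `q → 0⁺`. -/
theorem extended_scan_error_vanishes
    (Δ : ℝ) (hΔ : Δ ≠ 0)
    (Ω : ℝ → Type) (m : ∀ q, MeasurableSpace (Ω q)) (P : ∀ q, Measure (Ω q))
    (hP : ∀ q, IsProbabilityMeasure (P q))
    (a0 : ∀ q, Ω q → ℝ) (ap : ∀ q, ℕ → Ω q → ℝ) (Z : ∀ q, ℕ → Ω q → ℝ)
    (ha0meas : ∀ q, Measurable (a0 q))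
    (hapmeas : ∀ q i, Measurable (ap q i))
    (hZmeas : ∀ q u, Measurable (Z q u))
    (hindep : ∀ q ∈ Set.Ioo (0 : ℝ) 1,
      iIndepFun
        (Sum.elim (fun _ : Unit => a0 q) (Sum.elim (ap q) (Z q))) (P q))
    (ha0range : ∀ q ∈ Set.Ioo (0 : ℝ) 1, ∀ ω, a0 q ω ∈ Set.Icc (0 : ℝ) 1)
    (haprange : ∀ q ∈ Set.Ioo (0 : ℝ) 1, ∀ i ω, ap q i ω ∈ Set.Icc (0 : ℝ) 1)
    (hiid : ∀ q ∈ Set.Ioo (0 : ℝ) 1, ∀ i, (P q).map (ap q i) = (P q).map (a0 q))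
    (hmean : ∀ q ∈ Set.Ioo (0 : ℝ) 1, ∫ ω, a0 q ω ∂(P q) = q)
    (hZdist : ∀ q ∈ Set.Ioo (0 : ℝ) 1, ∀ u, (P q).map (Z q u) = gaussianReal 0 1)
    (G : ℝ → ℝ → ℝ)
    (hG : ∀ q ∈ Set.Ioo (0 : ℝ) 1, ∀ x, G q x = ((P q) {ω | a0 q ω ≤ x}).toReal)
    (hvanish : Filter.Tendsto (fun q : ℝ => q⁻¹ * ∫ x in (0 : ℝ)..1, (1 - G q x) ^ 2)
      (nhdsWithin 0 (Set.Ioi 0)) (nhds 0)) :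
    Filter.Tendsto (fun q : ℝ => q⁻¹ *
        ∫ ω in {ω | ∃ i : ℕ, 1 ≤ i ∧ a0 q ω ≤ 2 * ap q i ω *
          Real.exp (Δ * (∑ u ∈ Finset.range i, Z q u ω) - (i : ℝ) * Δ ^ 2 / 2)},
          a0 q ω ∂(P q))
      (nhdsWithin 0 (Set.Ioi 0)) (nhds 0) := by
  have hr0 := (exp_pos (-(Δ ^ 2) / 8)).le
  have hr1 := exp_neg_sq_div_eight_lt_one hΔ
  generalize hr : exp (-(Δ ^ 2) / 8) = r at hr0 hr1
  have hIoo : Set.Ioo (0 : ℝ) 1 ∈ 𝓝[>] 0 := Ioo_mem_nhdsGT one_pos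
  refine tendsto_zero_of_le_mul_add (t := fun n => √2 * r ^ n / (1 - r))
    (by simpa using hvanish.const_mul 3)
    (by simpa using ((tendsto_pow_atTop_nhds_zero_of_lt_one hr0 hr1).const_mul √2).div_const _)
    ?_ fun n => ?_
  · filter_upwards [hIoo] with q hq
    exact mul_nonneg (inv_nonneg.2 hq.1.le)
      (setIntegral_nonneg_of_ae (.of_forall fun ω => (ha0range q hq ω).1))
  · filter_upwards [hIoo] with q hq
    have := hP q
    have hscan := setIntegral_scan_le hΔ (ha0meas q) (hapmeas q) (hZmeas q) (hindep q hq)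
      (ha0range q hq) (fun i ω => (haprange q hq i ω).1) (hiid q hq) (hZdist q hq) n
    have hcdf : ∫ x in (0 : ℝ)..1, (1 - G q x) ^ 2
        = ∫ x in (0 : ℝ)..1, (1 - (P q).real {ω | a0 q ω ≤ x}) ^ 2 := by
      simp only [hG q hq]
      rfl
    rw [hmean q hq, hr] at hscan
    rw [hcdf]
    calc _ ≤ q⁻¹ * _ := mul_le_mul_of_nonneg_left hscan (inv_nonneg.2 hq.1.le)
      _ = _ := by field_simp [hq.1.ne']
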